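/- arXiv:1904.11287 — 3 statements merged into one kernel-verified Lean document; each statement's English description precedes it below -/
import Mathlib

section
/- Sequential composition of open games is associative: for open games G : (X,S) → (Y,R), H : (Y,R) → (Z,Q) and K : (Z,Q) → (W,P), under the canonical bijection Σ_G × (Σ_H × Σ_K) ≅ (Σ_G × Σ_H) × Σ_K the composites K∘(H∘G) and (K∘H)∘G have equal labelling functions, and for every context (h,k) with h : X, k : W → P, |K∘(H∘G)|^{(σ,(τ,υ))}_{(h,k)} holds if and only if |(K∘H)∘G|^{((σ,τ),υ)}_{(h,k)} holds. -/
/-- A lens `(X,S) → (Y,R)` between types. -/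
structure Lens (X S Y R : Type) where
  v : X → Y
  u : X × R → S

/-- Composition of lenses (diagrammatic order: `l.comp m` is `m ∘ l`). -/
def Lens.comp {X S Y R Z Q : Type} (l : Lens X S Y R) (m : Lens Y R Z Q) :
    Lens X S Z Q where
  v x := m.v (l.v x)
  u p := l.u (p.1, m.u (l.v p.1, p.2))

/-- The identity lens on `(X,S)`. -/
def Lens.id (X S : Type) : Lens X S X S where
  v x := x
  u p := p.2

/-- The tensor of lenses. -/
def Lens.tensor {X₁ S₁ Y₁ R₁ X₂ S₂ Y₂ R₂ : Type}
    (l : Lens X₁ S₁ Y₁ R₁) (m : Lens X₂ S₂ Y₂ R₂) :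
    Lens (X₁ × X₂) (S₂ × S₁) (Y₁ × Y₂) (R₂ × R₁) where
  v x := (l.v x.1, m.v x.2)
  u p := (m.u (p.1.2, p.2.1), l.u (p.1.1, p.2.2))

/-- An open game `(X,S) → (Y,R)`: a type of strategy profiles, a labelling
function into lenses, and an equilibrium relation between strategy profiles
and contexts `(h,k)` with `h : X`, `k : Y → R`. -/
structure Game (X S Y R : Type) where
  Strat : Type
  play : Strat → Lens X S Y R
  eq : Strat → X × (Y → R) → Prop

/-- Sequential composition of open games. -/
def Game.comp {X S Y R Z Q : Type} (G : Game X S Y R) (H : Game Y R Z Q) :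
    Game X S Z Q where
  Strat := G.Strat × H.Strat
  play s := (G.play s.1).comp (H.play s.2)
  eq s c :=
    G.eq s.1 (c.1, fun y => (H.play s.2).u (y, c.2 ((H.play s.2).v y))) ∧
      H.eq s.2 ((G.play s.1).v c.1, c.2)

/-- Tensor (simultaneous play) of open games. -/
def Game.tensor {X₁ S₁ Y₁ R₁ X₂ S₂ Y₂ R₂ : Type}
    (G : Game X₁ S₁ Y₁ R₁) (H : Game X₂ S₂ Y₂ R₂) :
    Game (X₁ × X₂) (S₂ × S₁) (Y₁ × Y₂) (R₂ × R₁) where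
  Strat := G.Strat × H.Strat
  play s := (G.play s.1).tensor (H.play s.2)
  eq s c :=
    G.eq s.1 (c.1.1, fun y₁ => (c.2 (y₁, (H.play s.2).v c.1.2)).2) ∧
      H.eq s.2 (c.1.2, fun y₂ => (c.2 ((G.play s.1).v c.1.1, y₂)).1)

/-- The zero-player open game of a lens. -/
def Game.ofLens {X S Y R : Type} (l : Lens X S Y R) : Game X S Y R where
  Strat := PUnit
  play _ := l
  eq _ _ := True

/-- Sequential composition of open games is associative, up to the canonical
bijection of strategy profiles. -/
theorem game_comp_assoc {X S Y R Z Q W P : Type}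
    (G : Game X S Y R) (H : Game Y R Z Q) (K : Game Z Q W P)
    (σ : G.Strat) (τ : H.Strat) (υ : K.Strat) :
    ((G.comp H).comp K).play ((σ, τ), υ) = (G.comp (H.comp K)).play (σ, (τ, υ)) ∧
      ∀ (h : X) (k : W → P),
        (G.comp (H.comp K)).eq (σ, (τ, υ)) (h, k) ↔
          ((G.comp H).comp K).eq ((σ, τ), υ) (h, k) := by
  refine ⟨rfl, fun h k => ?_⟩
  simp [Game.comp, Lens.comp, and_assoc]
end

section
/- Open games satisfy the interchange law: for open games G : (X₁,S₁) → (Y₁,R₁), G' : (Y₁,R₁) → (Z₁,Q₁), H : (X₂,S₂) → (Y₂,R₂) and H' : (Y₂,R₂) → (Z₂,Q₂), under the canonical bijection (Σ_G × Σ_H) × (Σ_{G'} × Σ_{H'}) ≅ (Σ_G × Σ_{G'}) × (Σ_H × Σ_{H'}) the open games (G'⊗H')∘(G⊗H) and (G'∘G)⊗(H'∘H) have equal labelling functions, and their equilibrium relations coincide: for all strategy profiles and all contexts ((h₁,h₂),k) with h₁ : X₁, h₂ : X₂, k : Z₁ × Z₂ → Q₂ × Q₁, |(G'⊗H')∘(G⊗H)|^{((σ,τ),(σ',τ'))}_{((h₁,h₂),k)}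 holds if and only if |(G'∘G)⊗(H'∘H)|^{((σ,σ'),(τ,τ'))}_{((h₁,h₂),k)} holds. -/
/-- Interchange law for open games: `(G'⊗H')∘(G⊗H) = (G'∘G)⊗(H'∘H)` up to the
canonical bijection of strategy profiles. -/
theorem game_interchange {X₁ S₁ Y₁ R₁ Z₁ Q₁ X₂ S₂ Y₂ R₂ Z₂ Q₂ : Type}
    (G : Game X₁ S₁ Y₁ R₁) (G' : Game Y₁ R₁ Z₁ Q₁)
    (H : Game X₂ S₂ Y₂ R₂) (H' : Game Y₂ R₂ Z₂ Q₂)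
    (σ : G.Strat) (σ' : G'.Strat) (τ : H.Strat) (τ' : H'.Strat) :
    ((G.tensor H).comp (G'.tensor H')).play ((σ, τ), (σ', τ'))
        = ((G.comp G').tensor (H.comp H')).play ((σ, σ'), (τ, τ')) ∧
      ∀ (h₁ : X₁) (h₂ : X₂) (k : Z₁ × Z₂ → Q₂ × Q₁),
        ((G.tensor H).comp (G'.tensor H')).eq ((σ, τ), (σ', τ')) ((h₁, h₂), k) ↔
          ((G.comp G').tensor (H.comp H')).eq ((σ, σ'), (τ, τ')) ((h₁, h₂), k) := by
  constructor
  · rfl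
  · intro h₁ h₂ k
    simp only [Game.comp, Game.tensor, Lens.comp, Lens.tensor]
    tauto
end

section
/- Bimatrix games as composed open games have Nash equilibria as equilibria: let X and Y be nonempty types and U : X × Y → ℝ × ℝ, writing U₁, U₂ for the components. Let K : (X × Y, ℝ × ℝ) → (PUnit, PUnit) be the zero-player open game of the lens with forward part constant () and backward part ((x,y),()) ↦ (U₂(x,y), U₁(x,y)). Then the closed open game G := K ∘ (D_X ⊗ D_Y) : (PUnit×PUnit, PUnit×PUnit) → (PUnit, PUnit) has strategy profiles (X × Y) × PUnit, and for all x : X, y : Y, and the trivial context, |G|^{((x,y),*)} holds if and only if (∀ x', U₁(x',y) ≤ U₁(x,y)) and (∀ y', U₂(x,y') ≤ U₂(x,y)), i.e. (x,y) is a pure-strategy Nash equilibrium of the bimatrix game U. -/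
/-- The closed decision `D_Y : (PUnit,PUnit) → (Y,ℝ)`. -/
def closedDecision (Y : Type) [Nonempty Y] : Game PUnit PUnit Y ℝ where
  Strat := Y
  play y := ⟨fun _ => y, fun _ => PUnit.unit⟩
  eq y c := ∀ y', c.2 y' ≤ c.2 y

/-- The payoff lens `(X × Y, ℝ × ℝ) → (PUnit, PUnit)` of a bimatrix game `U`. -/
def payoffLens {X Y : Type} (U : X × Y → ℝ × ℝ) :
    Lens (X × Y) (ℝ × ℝ) PUnit PUnit where
  v _ := PUnit.unit
  u p := ((U p.1).2, (U p.1).1)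

/-- Bimatrix games as composed open games have exactly the pure-strategy Nash
equilibria as equilibria. -/
theorem bimatrix_nash (X Y : Type) [Nonempty X] [Nonempty Y] (U : X × Y → ℝ × ℝ) :
    (((closedDecision X).tensor (closedDecision Y)).comp
        (Game.ofLens (payoffLens U))).Strat = ((X × Y) × PUnit) ∧
    ∀ (x : X) (y : Y),
      (((closedDecision X).tensor (closedDecision Y)).comp
          (Game.ofLens (payoffLens U))).eq
        ((x, y), PUnit.unit) ((PUnit.unit, PUnit.unit), fun _ => PUnit.unit) ↔
      (∀ x', (U (x', y)).1 ≤ (U (x, y)).1) ∧ (∀ y', (U (x, y')).2 ≤ (U (x, y)).2) := by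
  refine ⟨rfl, fun x y => ?_⟩
  simp only [Game.comp, Game.tensor, Game.ofLens, closedDecision, payoffLens, Lens.tensor]
  constructor
  · rintro ⟨⟨h1, h2⟩, -⟩
    exact ⟨h1, h2⟩
  · rintro ⟨h1, h2⟩
    exact ⟨⟨h1, h2⟩, trivial⟩
end
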